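/- Assume π is a nonzerodivisor in C. Let φ : A → C be a ring homomorphism such that φ(x) − u(x)^q ∈ πC for all x ∈ A. Then there is a unique function δ : A → C with φ(x) = u(x)^q + π·δ(x) for all x, and this δ is a π-derivation (with Teichmüller cocycle c); in other words, for flat (π-torsion-free) algebras, lifts of the q-power Frobenius correspond to π-derivations. -/
import Mathlib


/-- A `π`-derivation from `A` to `C` (with Teichmüller cocycle `c`). -/
def IsPiDerivation {R A C : Type*} [CommRing R] [CommRing A] [CommRing C]
    [Algebra R A] [Algebra R C] [Algebra A C] [IsScalarTower R A C]
    (q : ℕ) (π : R) (c : MvPolynomial (Fin 2) R) (δ : A → C) : Prop :=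
  δ 1 = 0 ∧
  (∀ x y : A, δ (x + y) = δ x + δ y +
      MvPolynomial.aeval
        (fun i : Fin 2 => if i = 0 then algebraMap A C x else algebraMap A C y) c) ∧
  (∀ x y : A, δ (x * y) = (algebraMap A C x) ^ q * δ y + (algebraMap A C y) ^ q * δ x +
      algebraMap R C π * (δ x * δ y))

/-- If `π` is a nonzerodivisor in `C` and `φ : A →+* C` is a ring homomorphism with
`φ(x) ≡ u(x)^q mod πC` for all `x`, then there is a unique function `δ : A → C` with
`φ(x) = u(x)^q + π·δ(x)`, and any such `δ` is a `π`-derivation. -/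
theorem frobenius_lift_gives_unique_pi_derivation
    {R A C : Type*} [CommRing R] [CommRing A] [CommRing C]
    [Algebra R A] [Algebra R C] [Algebra A C] [IsScalarTower R A C]
    (q : ℕ) (hq : 2 ≤ q) (π : R) (c : MvPolynomial (Fin 2) R)
    (hc : MvPolynomial.C π * c =
      MvPolynomial.X 0 ^ q + MvPolynomial.X 1 ^ q -
        (MvPolynomial.X 0 + MvPolynomial.X 1) ^ q)
    (hπ : ∀ x y : C, algebraMap R C π * x = algebraMap R C π * y → x = y)
    (φ : A →+* C)
    (hφ : ∀ x : A, φ x - (algebraMap A C x) ^ q ∈ Ideal.span {algebraMap R C π}) :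
    (∃! δ : A → C, ∀ x : A, φ x = (algebraMap A C x) ^ q + algebraMap R C π * δ x) ∧
    (∀ δ : A → C, (∀ x : A, φ x = (algebraMap A C x) ^ q + algebraMap R C π * δ x) →
      IsPiDerivation q π c δ) := by
  constructor
  · have h : ∀ x : A, ∃ d : C, φ x = (algebraMap A C x) ^ q + algebraMap R C π * d := by
      intro x
      obtain ⟨d, hd⟩ := Ideal.mem_span_singleton.mp (hφ x)
      exact ⟨d, by linear_combination hd⟩
    refine ⟨fun x => (h x).choose, fun x => (h x).choose_spec, ?_⟩
    intro δ hδ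
    funext x
    exact hπ _ _ (by linear_combination (h x).choose_spec - hδ x)
  · intro δ hδ
    refine ⟨?_, ?_, ?_⟩
    · apply hπ _ 0
      have h1 := hδ 1
      simp only [map_one, one_pow] at h1
      simpa using h1.symm
    · intro x y
      apply hπ
      have hc' := congrArg (MvPolynomial.aeval
        (fun i : Fin 2 => if i = 0 then algebraMap A C x else algebraMap A C y)) hc
      simp only [map_mul, map_add, map_sub, map_pow, MvPolynomial.aeval_C,
        MvPolynomial.aeval_X, if_pos rfl] at hc'
      norm_num at hc'
      have h1 := hδ (x + y)
      have h2 := hδ x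
      have h3 := hδ y
      simp only [map_add] at h1
      linear_combination h2 + h3 - h1 - hc'
    · intro x y
      apply hπ
      have h1 := hδ (x * y)
      have h2 := hδ x
      have h3 := hδ y
      simp only [map_mul] at h1
      linear_combination φ y * h2 + ((algebraMap A C x)^q + algebraMap R C π * δ x) * h3 - h1
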